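/- Suppose γ_{d,0} = 0, τ_{1,1} = τ_{2,1} = 0, A_2 > A_1, and γ_{1,0}τ_{2,0}w_{2,0} − (1−γ_{1,0})τ_{1,0}w_{1,0} < 0 (the high-saving agent 1 is taxed too heavily). Then, holding all other parameters fixed (with β_1 ∈ (0,1) fixed), there exists β̄ ∈ (0,1) such that for every β_2 ∈ (0, β̄), the intervention is harmful: Y_1 − Y_1* < 0. -/

import Mathlib

/-
With `A1 < A2` all capital is invested in the second technology, so both GDPs are `A2` times
aggregate savings, and each agent saves the fraction `β/(1+β)` of disposable income. The
intervention changes agent `i`'s income by `γi T0 - τi wi`; for agent 1 this is the negative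
quantity `γ10 τ20 w2 - (1 - γ10) τ10 w1`, a fixed loss, while agent 2's change is weighted by
`β2/(1+β2)`, which tends to `0` with `β2`.
-/

open Set

/-- Date-0 government revenue `T0 = τ10·w1 + τ20·w2`. -/
noncomputable def T0 (w1 w2 τ10 τ20 : ℝ) : ℝ := τ10 * w1 + τ20 * w2

/-- Closed-form equilibrium date-1 GDP with intervention in the two-agent
log-linear economy when `γd = 0` and there are no date-1 taxes
(`τ11 = τ21 = 0`); the formula is valid when `A2 > A1`. -/
noncomputable def Y1NoTax (w1 w2 β1 β2 τ10 τ20 γ10 γ20 A2 : ℝ) : ℝ :=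
  A2 * (β2 * ((1 - τ20) * w2 + γ20 * T0 w1 w2 τ10 τ20) / (1 + β2) +
        β1 * ((1 - τ10) * w1 + γ10 * T0 w1 w2 τ10 τ20) / (1 + β1))

/-- Equilibrium date-1 GDP without any intervention:
`Y1* = (β2 w2/(1+β2) + β1 w1/(1+β1))·max(A1, A2)`. -/
noncomputable def Y1star (w1 w2 β1 β2 A1 A2 : ℝ) : ℝ :=
  (β2 * w2 / (1 + β2) + β1 * w1 / (1 + β1)) * max A1 A2

open Filter Topology

theorem Y1NoTax_sub_Y1star {w1 w2 β1 β2 τ10 τ20 γ10 γ20 A1 A2 : ℝ} (hA : A1 ≤ A2) :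
    Y1NoTax w1 w2 β1 β2 τ10 τ20 γ10 γ20 A2 - Y1star w1 w2 β1 β2 A1 A2 =
      A2 * (β2 / (1 + β2) * (γ20 * T0 w1 w2 τ10 τ20 - τ20 * w2) +
        β1 / (1 + β1) * (γ10 * τ20 * w2 - (1 - γ10) * τ10 * w1)) := by
  rw [Y1NoTax, Y1star, T0, max_eq_right hA]
  ring

theorem eventually_saving_rate_mul_add_neg {x c : ℝ} (hc : c < 0) :
    ∀ᶠ t in 𝓝 (0 : ℝ), t / (1 + t) * x + c < 0 := by
  have hcont : ContinuousAt (fun t : ℝ => t / (1 + t) * x + c) 0 := by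
    fun_prop (disch := norm_num)
  exact (by simpa using hcont.tendsto : Tendsto _ _ (𝓝 c)).eventually_lt_const hc

theorem exists_Ioo_forall_of_eventually_nhdsGT {α : Type*} [TopologicalSpace α] [LinearOrder α]
    [OrderTopology α] [DenselyOrdered α] {p : α → Prop} {a c : α}
    (hp : ∀ᶠ t in 𝓝[>] a, p t) (hac : a < c) : ∃ b ∈ Ioo a c, ∀ t ∈ Ioo a b, p t := by
  obtain ⟨c', hac', hc'c⟩ := exists_between hac
  obtain ⟨b, ⟨hab, hbc'⟩, hsub⟩ := (mem_nhdsGT_iff_exists_mem_Ioc_Ioo_subset hac').1 hp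
  exact ⟨b, ⟨hab, hbc'.trans_lt hc'c⟩, hsub⟩

theorem intervention_harmful_for_low_beta2_general
    (w1 w2 β1 τ10 τ20 γ10 γ20 A1 A2 : ℝ)
    (hβ1 : β1 ∈ Set.Ioo (0 : ℝ) 1)
    (hA2 : 0 < A2) (hA : A1 < A2)
    (hovertax1 : γ10 * τ20 * w2 - (1 - γ10) * τ10 * w1 < 0) :
    ∃ βbar ∈ Set.Ioo (0 : ℝ) 1, ∀ β2 : ℝ, 0 < β2 → β2 < βbar →
      Y1NoTax w1 w2 β1 β2 τ10 τ20 γ10 γ20 A2 - Y1star w1 w2 β1 β2 A1 A2 < 0 := by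
  have hloss : β1 / (1 + β1) * (γ10 * τ20 * w2 - (1 - γ10) * τ10 * w1) < 0 :=
    mul_neg_of_pos_of_neg (div_pos hβ1.1 (by linarith [hβ1.1])) hovertax1
  obtain ⟨βbar, hβbar, hsmall⟩ := exists_Ioo_forall_of_eventually_nhdsGT
    (nhdsWithin_le_nhds (eventually_saving_rate_mul_add_neg
      (x := γ20 * T0 w1 w2 τ10 τ20 - τ20 * w2) hloss)) zero_lt_one
  refine ⟨βbar, hβbar, fun β2 hβ2 hβ2bar => ?_⟩
  rw [Y1NoTax_sub_Y1star hA.le]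
  exact mul_neg_of_pos_of_neg hA2 (hsmall β2 ⟨hβ2, hβ2bar⟩)

/-- Proposition 4.4, point 3: a distorted redistribution is
harmful for a low discount factor of the more productive agent: if `γd = 0`,
`τ11 = τ21 = 0`, `A2 > A1`, and the high-saving agent 1 is taxed too heavily,
i.e. `γ10 τ20 w2 − (1−γ10)τ10 w1 < 0`, then (all other parameters held fixed,
with `β1 ∈ (0,1)` fixed) there exists `β̄ ∈ (0,1)` such that for every
`β2 ∈ (0, β̄)` one has `Y1 − Y1* < 0`. -/
theorem intervention_harmful_for_low_beta2
    (w1 w2 β1 τ10 τ20 γ10 γ20 A1 A2 : ℝ)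
    (hw1 : 0 < w1) (hw2 : 0 < w2) (hβ1 : β1 ∈ Set.Ioo (0 : ℝ) 1)
    (hτ10 : τ10 ∈ Set.Ico (0 : ℝ) 1) (hτ20 : τ20 ∈ Set.Ico (0 : ℝ) 1)
    (hγ10 : γ10 ∈ Set.Icc (0 : ℝ) 1) (hγ20 : γ20 ∈ Set.Icc (0 : ℝ) 1)
    (hsum0 : γ10 + γ20 ≤ 1)
    (hA1 : 0 < A1) (hA2 : 0 < A2) (hA : A1 < A2)
    (hovertax1 : γ10 * τ20 * w2 - (1 - γ10) * τ10 * w1 < 0) :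
    ∃ βbar ∈ Set.Ioo (0 : ℝ) 1, ∀ β2 : ℝ, 0 < β2 → β2 < βbar →
      Y1NoTax w1 w2 β1 β2 τ10 τ20 γ10 γ20 A2 - Y1star w1 w2 β1 β2 A1 A2 < 0 :=
  intervention_harmful_for_low_beta2_general w1 w2 β1 τ10 τ20 γ10 γ20 A1 A2 hβ1 hA2 hA hovertax1
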